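/- For 0 < v < 1, the four vector-valued functions L₁(t) = (tanh(√2 v t), 0, √2 v sech(√2 v t)², 0), L₂(t) = (√2 v t tanh(√2 v t) - 1, 0, 2v² t sech(√2 v t)² + √2 v tanh(√2 v t), 0), L₃(t) = (0, 1, 0, 0), L₄(t) = (0, t, 0, 1) are solutions of the linear ODE system L'(t) = M(t) L(t), where M(t) is the 4×4 matrix with M₁₃ = M₂₄ = 1, M₃₁ = -32 e^{-√2 d_v(t)} = -4 v² sech(√2 v t)², and all other entries zero. -/

import Mathlib

open Real

noncomputable def dv (v t : ℝ) : ℝ :=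
  (1 / Real.sqrt 2) * Real.log ((8 / v ^ 2) * Real.cosh (Real.sqrt 2 * v * t) ^ 2)

/-- `(a, b, c, d)` solves the linear system `x₁' = x₃`, `x₂' = x₄`,
`x₃' = -32 e^{-√2 d_v(t)} x₁`, `x₄' = 0`. -/
def IsSolLinSys (v : ℝ) (a b c d : ℝ → ℝ) : Prop :=
  ∀ t : ℝ, deriv a t = c t ∧ deriv b t = d t ∧
    deriv c t = -32 * Real.exp (-(Real.sqrt 2) * dv v t) * a t ∧
    deriv d t = 0

/-!
With `c = √2 v` one has `-32 e^{-√2 d_v(t)} = -2 c² sech²(c t)`, so the system decouples into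
`x₂'' = 0`, solved by `1` and `t`, and `x₁'' = -2 c² sech²(c t) x₁`. The two solutions of the latter
are the modes `∂ₜ d_v / 2v = tanh (c t)` and `v ∂ᵥ d_v / √2 = c t tanh (c t) - 1`; that they solve it
is a direct computation from `tanh' = sech²` and `(sech²)' = -2 tanh sech²`.
-/

namespace Real

theorem hasDerivAt_tanh (x : ℝ) : HasDerivAt tanh ((1 / cosh x) ^ 2) x := by
  have hcosh : cosh x ≠ 0 := (cosh_pos x).ne'
  rw [show tanh = fun y => sinh y / cosh y from funext tanh_eq_sinh_div_cosh]
  refine ((hasDerivAt_sinh x).div (hasDerivAt_cosh x) hcosh).congr_deriv ?_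
  field_simp
  linear_combination cosh_sq_sub_sinh_sq x

end Real

section

variable (c t : ℝ)

theorem hasDerivAt_tanh_mul :
    HasDerivAt (fun t => tanh (c * t)) (c * (1 / cosh (c * t)) ^ 2) t := by
  simpa [mul_comm, Function.comp_def] using
    (hasDerivAt_tanh (c * t)).comp t ((hasDerivAt_id' t).const_mul c)

theorem hasDerivAt_sech_sq_mul :
    HasDerivAt (fun t => (1 / cosh (c * t)) ^ 2)
      (-2 * c * tanh (c * t) * (1 / cosh (c * t)) ^ 2) t := by
  have hcosh : cosh (c * t) ≠ 0 := (cosh_pos _).ne'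
  have h := (((hasDerivAt_id' t).const_mul c).cosh.inv hcosh).pow 2
  simp only [one_div]
  refine h.congr_deriv ?_
  simp only [Pi.inv_apply, tanh_eq_sinh_div_cosh, Nat.add_one_sub_one, pow_one]
  field_simp
  ring

theorem hasDerivAt_mul_sech_sq_mul :
    HasDerivAt (fun t => c * (1 / cosh (c * t)) ^ 2)
      (-2 * c ^ 2 * (1 / cosh (c * t)) ^ 2 * tanh (c * t)) t :=
  ((hasDerivAt_sech_sq_mul c t).const_mul c).congr_deriv (by ring)

theorem hasDerivAt_mul_mul_tanh_mul_sub_one :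
    HasDerivAt (fun t => c * t * tanh (c * t) - 1)
      (c ^ 2 * t * (1 / cosh (c * t)) ^ 2 + c * tanh (c * t)) t :=
  ((((hasDerivAt_id' t).const_mul c).mul (hasDerivAt_tanh_mul c t)).sub_const 1).congr_deriv
    (by ring)

theorem hasDerivAt_sq_mul_mul_sech_sq_mul_add :
    HasDerivAt (fun t => c ^ 2 * t * (1 / cosh (c * t)) ^ 2 + c * tanh (c * t))
      (-2 * c ^ 2 * (1 / cosh (c * t)) ^ 2 * (c * t * tanh (c * t) - 1)) t :=
  ((((hasDerivAt_id' t).const_mul (c ^ 2)).mul (hasDerivAt_sech_sq_mul c t)).add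
    ((hasDerivAt_tanh_mul c t).const_mul c)).congr_deriv (by ring)

end

theorem exp_neg_sqrt_two_mul_dv {v : ℝ} (hv : v ≠ 0) (t : ℝ) :
    exp (-√2 * dv v t) = v ^ 2 / 8 * (1 / cosh (√2 * v * t)) ^ 2 := by
  have hlog : -√2 * dv v t = -log (8 / v ^ 2 * cosh (√2 * v * t) ^ 2) := by
    rw [dv]
    field_simp
  have hpos : 0 < 8 / v ^ 2 * cosh (√2 * v * t) ^ 2 := by positivity
  rw [hlog, exp_neg, exp_log hpos]
  field_simp

theorem IsSolLinSys.of_hasDerivAt {v : ℝ} (hv : v ≠ 0) {a b c d : ℝ → ℝ}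
    (ha : ∀ t, HasDerivAt a (c t) t) (hb : ∀ t, HasDerivAt b (d t) t)
    (hc : ∀ t, HasDerivAt c (-2 * (√2 * v) ^ 2 * (1 / cosh (√2 * v * t)) ^ 2 * a t) t)
    (hd : ∀ t, HasDerivAt d 0 t) :
    IsSolLinSys v a b c d := by
  intro t
  refine ⟨(ha t).deriv, (hb t).deriv, ?_, (hd t).deriv⟩
  rw [(hc t).deriv, exp_neg_sqrt_two_mul_dv hv, mul_pow, sq_sqrt zero_le_two]
  ring

theorem fundamental_solutions_general (v : ℝ) (hv0 : 0 < v) :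
    IsSolLinSys v (fun t => Real.tanh (Real.sqrt 2 * v * t)) (fun _ => 0)
        (fun t => Real.sqrt 2 * v * (1 / Real.cosh (Real.sqrt 2 * v * t)) ^ 2)
        (fun _ => 0) ∧
    IsSolLinSys v
        (fun t => Real.sqrt 2 * v * t * Real.tanh (Real.sqrt 2 * v * t) - 1)
        (fun _ => 0)
        (fun t => 2 * v ^ 2 * t * (1 / Real.cosh (Real.sqrt 2 * v * t)) ^ 2 +
          Real.sqrt 2 * v * Real.tanh (Real.sqrt 2 * v * t))
        (fun _ => 0) ∧
    IsSolLinSys v (fun _ => 0) (fun _ => 1) (fun _ => 0) (fun _ => 0) ∧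
    IsSolLinSys v (fun _ => 0) (fun t => t) (fun _ => 0) (fun _ => 1) := by
  have hv : v ≠ 0 := hv0.ne'
  have hc2 : (√2 * v) ^ 2 = 2 * v ^ 2 := by rw [mul_pow, sq_sqrt zero_le_two]
  have hconst (x : ℝ) (t : ℝ) : HasDerivAt (fun _ : ℝ => x) 0 t := hasDerivAt_const t x
  have hzero (t : ℝ) : HasDerivAt (fun _ : ℝ => (0 : ℝ))
      (-2 * (√2 * v) ^ 2 * (1 / cosh (√2 * v * t)) ^ 2 * 0) t :=
    (hconst 0 t).congr_deriv (mul_zero _).symm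
  refine ⟨.of_hasDerivAt hv (hasDerivAt_tanh_mul _) (hconst 0) (hasDerivAt_mul_sech_sq_mul _)
      (hconst 0), .of_hasDerivAt hv ?_ (hconst 0) ?_ (hconst 0),
    .of_hasDerivAt hv (hconst 0) (hconst 1) hzero (hconst 0),
    .of_hasDerivAt hv (hconst 0) hasDerivAt_id' hzero (hconst 1)⟩
  · simpa only [hc2] using hasDerivAt_mul_mul_tanh_mul_sub_one (√2 * v)
  · simpa only [hc2] using hasDerivAt_sq_mul_mul_sech_sq_mul_add (√2 * v)

theorem fundamental_solutions (v : ℝ) (hv0 : 0 < v) (hv1 : v < 1) :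
    IsSolLinSys v (fun t => Real.tanh (Real.sqrt 2 * v * t)) (fun _ => 0)
        (fun t => Real.sqrt 2 * v * (1 / Real.cosh (Real.sqrt 2 * v * t)) ^ 2)
        (fun _ => 0) ∧
    IsSolLinSys v
        (fun t => Real.sqrt 2 * v * t * Real.tanh (Real.sqrt 2 * v * t) - 1)
        (fun _ => 0)
        (fun t => 2 * v ^ 2 * t * (1 / Real.cosh (Real.sqrt 2 * v * t)) ^ 2 +
          Real.sqrt 2 * v * Real.tanh (Real.sqrt 2 * v * t))
        (fun _ => 0) ∧
    IsSolLinSys v (fun _ => 0) (fun _ => 1) (fun _ => 0) (fun _ => 0) ∧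
    IsSolLinSys v (fun _ => 0) (fun t => t) (fun _ => 0) (fun _ => 1) :=
  fundamental_solutions_general v hv0
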